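/- Under the leakage condition Σ_j P_j ≥ α I on H₀ (α > 0), for every x with ⟨x,R₀x⟩ > 0 one has ⟨x, R_∞(ω) x⟩ = 0 for ν_x-almost every ω; i.e., the residual x-energy vanishes along almost every branch. -/

import Mathlib

open MeasureTheory ContinuousLinearMap Filter Topology
open scoped InnerProductSpace ENNReal

variable {H : Type*} [NormedAddCommGroup H] [InnerProductSpace ℂ H] [CompleteSpace H]

/-- The positive square root of a (positive) bounded operator, via the
continuous functional calculus. -/
noncomputable def sqrtOp (T : H →L[ℂ] H) : H →L[ℂ] H := CFC.sqrt T

/-- The weighted residual map `Φ_P(R) = R^{1/2} (I - P) R^{1/2}`. -/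
noncomputable def wrStep (P R : H →L[ℂ] H) : H →L[ℂ] H :=
  sqrtOp R * (1 - P) * sqrtOp R

/-- The dissipated piece `D = R^{1/2} P R^{1/2}`. -/
noncomputable def wrDiss (P R : H →L[ℂ] H) : H →L[ℂ] H :=
  sqrtOp R * P * sqrtOp R

/-- WR tree residuals, indexed by finite words over `Fin m` written in
*reversed* order (the head of the list is the last letter of the word). -/
noncomputable def wrRes {m : ℕ} (R0 : H →L[ℂ] H) (P : Fin m → H →L[ℂ] H) :
    List (Fin m) → H →L[ℂ] H
  | [] => R0
  | j :: w => wrStep (P j) (wrRes R0 P w)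

/-- WR residuals along an infinite branch `ω`. -/
noncomputable def wrResB {m : ℕ} (R0 : H →L[ℂ] H) (P : Fin m → H →L[ℂ] H)
    (ω : ℕ → Fin m) : ℕ → H →L[ℂ] H
  | 0 => R0
  | n + 1 => wrStep (P (ω n)) (wrResB R0 P ω n)

/-- The cylinder set of all infinite words extending the finite word `w`. -/
def cylinder {m : ℕ} (w : List (Fin m)) : Set (ℕ → Fin m) :=
  {ω | ∀ i, (h : i < w.length) → ω i = w.get ⟨i, h⟩}

/-- The filtration whose `n`-th σ-algebra is generated by the length-`n`
cylinders, i.e. by the first `n` coordinates. -/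
def prefixFiltration (m : ℕ) :
    Filtration ℕ (inferInstance : MeasurableSpace (ℕ → Fin m)) where
  seq n := ⨆ i ∈ Finset.range n, MeasurableSpace.comap (fun ω => ω i) inferInstance
  mono' _ _ hab := biSup_mono fun _ hi =>
    Finset.mem_range.mpr (lt_of_lt_of_le (Finset.mem_range.mp hi) hab)
  le' _ := iSup₂_le fun i _ => measurable_iff_comap_le.mp (measurable_pi_apply i)

/-- Cylinder weight `p(j₁|∅)p(j₂|j₁)⋯p(jₙ|j₁⋯j_{n-1})`; the accumulator `pre`
is the reversed prefix read so far. -/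
noncomputable def wrCylWeight {m : ℕ} (p : List (Fin m) → Fin m → ℝ) :
    List (Fin m) → List (Fin m) → ℝ
  | _, [] => 1
  | pre, j :: rest => p pre j * wrCylWeight p (j :: pre) rest

/-- Energy-biased transition probabilities `p_x(j | w)` (the word `w` is given
in reversed order): proportional to the dissipated `x`-energy
`⟨x, D_{wj} x⟩` when some energy is dissipated, and given by the reference
probability vector `q` at `x`-dead nodes. -/
noncomputable def pX {m : ℕ} (R0 : H →L[ℂ] H) (P : Fin m → H →L[ℂ] H) (x : H)
    (q : Fin m → ℝ) (w : List (Fin m)) (j : Fin m) : ℝ :=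
  if 0 < ∑ k, (⟪x, wrDiss (P k) (wrRes R0 P w) x⟫_ℂ).re then
    (⟪x, wrDiss (P j) (wrRes R0 P w) x⟫_ℂ).re /
      ∑ k, (⟪x, wrDiss (P k) (wrRes R0 P w) x⟫_ℂ).re
  else q j

/-! At a node `w` the `x`-energy splits as `⟨x, D_{wj} x⟩ + ⟨x, R_{wj} x⟩` for every letter
`j`. Every `√R_w x` stays in `closure (range √R₀)`, so leakage makes the dissipated parts sum
to at least `α ⟨x, R_w x⟩`; as `ν` picks `j` proportionally to them, Cauchy–Schwarz bounds the
expected next energy by `(1 - α/m) ⟨x, R_w x⟩`. The expected energy at depth `n` thus decays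
geometrically, and Fatou's lemma forces the limit energy to vanish almost surely. -/

/-- Cauchy–Schwarz `(∑ a)² ≤ n ∑ a²` turns the leakage `α M ≤ ∑ a` into a drop of the
`a`-weighted mean of `b = M - a`. -/
lemma sum_ite_div_mul_le {ι : Type*} [Fintype ι] {α M : ℝ} (hα : 0 < α) (hM : 0 ≤ M)
    {a b : ι → ℝ} (q : ι → ℝ) (ha : ∀ j, 0 ≤ a j) (hab : ∀ j, a j + b j = M)
    (hleak : α * M ≤ ∑ k, a k) :
    ∑ j, (if 0 < ∑ k, a k then a j / ∑ k, a k else q j) * b j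
      ≤ (1 - α / Fintype.card ι) * M := by
  set S := ∑ k, a k
  by_cases hS : 0 < S
  · have hn : (0 : ℝ) < Fintype.card ι :=
      Nat.cast_pos.mpr (Finset.card_pos.mpr (Finset.nonempty_of_sum_ne_zero hS.ne'))
    have hcs : S ^ 2 ≤ Fintype.card ι * ∑ j, a j ^ 2 := sq_sum_le_card_mul_sum_sq
    have hmean : ∑ j, a j / S * b j = (S * M - ∑ j, a j ^ 2) / S := by
      rw [eq_div_iff hS.ne', Finset.sum_mul, Finset.sum_mul, ← Finset.sum_sub_distrib]
      refine Finset.sum_congr rfl fun j _ => ?_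
      rw [← hab j]
      field_simp
      ring
    simp only [if_pos hS, hmean]
    have hdrop : α * M * S / Fintype.card ι ≤ ∑ j, a j ^ 2 := by
      rw [div_le_iff₀ hn]
      nlinarith
    rw [div_le_iff₀ hS]
    linarith [show (1 - α / Fintype.card ι) * M * S = S * M - α * M * S / Fintype.card ι by
      ring]
  · simp only [if_neg hS]
    have hS0 : S = 0 := le_antisymm (not_lt.mp hS) (Finset.sum_nonneg fun j _ => ha j)
    have hM0 : M = 0 := le_antisymm (by nlinarith) hM
    have hb0 : ∀ j, b j = 0 := fun j => by
      have := (Finset.sum_eq_zero_iff_of_nonneg fun j _ => ha j).mp hS0 j (Finset.mem_univ j)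
      linarith [hab j]
    simp [hb0, hM0]

lemma re_inner_apply_nonneg {E : Type*} [NormedAddCommGroup E] [InnerProductSpace ℂ E]
    {T : E →L[ℂ] E} (hT : 0 ≤ T) (x : E) : 0 ≤ (⟪x, T x⟫_ℂ).re :=
  ((nonneg_iff_isPositive T).mp hT).re_inner_nonneg_right x

lemma sqrtOp_nonneg (T : H →L[ℂ] H) : 0 ≤ sqrtOp T := CFC.sqrt_nonneg T

lemma sqrtOp_mul_sqrtOp {T : H →L[ℂ] H} (hT : 0 ≤ T) : sqrtOp T * sqrtOp T = T :=
  CFC.sqrt_mul_sqrt_self T hT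

lemma inner_sqrtOp_apply_comm (T : H →L[ℂ] H) (x y : H) :
    ⟪sqrtOp T x, y⟫_ℂ = ⟪x, sqrtOp T y⟫_ℂ :=
  ((nonneg_iff_isPositive _).mp (sqrtOp_nonneg T)).inner_left_eq_inner_right x y

lemma inner_sqrtOp_conj_apply (R A : H →L[ℂ] H) (x : H) :
    ⟪x, (sqrtOp R * A * sqrtOp R) x⟫_ℂ = ⟪sqrtOp R x, A (sqrtOp R x)⟫_ℂ :=
  (inner_sqrtOp_apply_comm R _ _).symm

lemma norm_sqrtOp_apply_sq {R : H →L[ℂ] H} (hR : 0 ≤ R) (x : H) :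
    ‖sqrtOp R x‖ ^ 2 = (⟪x, R x⟫_ℂ).re := by
  have h := inner_sqrtOp_conj_apply R 1 x
  rw [mul_one, sqrtOp_mul_sqrtOp hR] at h
  simp [h, ← inner_self_eq_norm_sq (𝕜 := ℂ)]

lemma wrStep_nonneg {P : H →L[ℂ] H} (hP : IsStarProjection P) (R : H →L[ℂ] H) :
    0 ≤ wrStep P R :=
  conjugate_nonneg_of_nonneg hP.one_sub.nonneg (sqrtOp_nonneg R)

lemma wrDiss_nonneg {P : H →L[ℂ] H} (hP : IsStarProjection P) (R : H →L[ℂ] H) :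
    0 ≤ wrDiss P R :=
  conjugate_nonneg_of_nonneg hP.nonneg (sqrtOp_nonneg R)

lemma wrDiss_add_wrStep (P : H →L[ℂ] H) {R : H →L[ℂ] H} (hR : 0 ≤ R) :
    wrDiss P R + wrStep P R = R := by
  conv_rhs => rw [← sqrtOp_mul_sqrtOp hR]
  simp only [wrDiss, wrStep]
  noncomm_ring

/-- `√T` has the same kernel as `T`, so `range √T ⊆ (ker T)ᗮ = closure (range T)`. -/
lemma sqrtOp_apply_mem {K : Submodule ℂ H} (hK : IsClosed (K : Set H)) {T : H →L[ℂ] H}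
    (hT : 0 ≤ T) (hTK : ∀ z, T z ∈ K) (z : H) : sqrtOp T z ∈ K := by
  have : CompleteSpace K := hK.completeSpace_coe
  have hker : ∀ y ∈ Kᗮ, sqrtOp T y = 0 := fun y hy => by
    rw [← norm_eq_zero, ← sq_eq_zero_iff, norm_sqrtOp_apply_sq hT,
      Submodule.inner_left_of_mem_orthogonal (hTK y) hy, Complex.zero_re]
  rw [← K.orthogonal_orthogonal, Submodule.mem_orthogonal]
  intro u hu
  rw [← inner_sqrtOp_apply_comm, hker u hu, inner_zero_left]

section Tree

variable {m : ℕ} {R0 : H →L[ℂ] H} {P : Fin m → H →L[ℂ] H}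

lemma wrRes_nonneg (hR0 : 0 ≤ R0) (hP : ∀ j, IsStarProjection (P j)) :
    ∀ w, 0 ≤ wrRes R0 P w
  | [] => hR0
  | j :: _ => wrStep_nonneg (hP j) _

lemma wrRes_apply_mem (hR0 : 0 ≤ R0) (hP : ∀ j, IsStarProjection (P j)) {K : Submodule ℂ H}
    (hK : IsClosed (K : Set H)) (hR0K : ∀ z, R0 z ∈ K) : ∀ w z, wrRes R0 P w z ∈ K
  | [], z => hR0K z
  | _ :: w, _ =>
    sqrtOp_apply_mem hK (wrRes_nonneg hR0 hP w) (wrRes_apply_mem hR0 hP hK hR0K w) _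

lemma wrResB_eq_wrRes (ω : ℕ → Fin m) :
    ∀ n, wrResB R0 P ω n = wrRes R0 P (List.ofFn fun i : Fin n => ω i).reverse
  | 0 => rfl
  | n + 1 => by
    rw [List.ofFn_succ', List.concat_eq_append, List.reverse_append]
    simp [wrResB, wrResB_eq_wrRes ω n, wrRes]

noncomputable def wrEnergy (R0 : H →L[ℂ] H) (P : Fin m → H →L[ℂ] H) (x : H)
    (w : List (Fin m)) : ℝ :=
  (⟪x, wrRes R0 P w x⟫_ℂ).re

lemma wrEnergy_nonneg (hR0 : 0 ≤ R0) (hP : ∀ j, IsStarProjection (P j)) (x : H)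
    (w : List (Fin m)) : 0 ≤ wrEnergy R0 P x w :=
  re_inner_apply_nonneg (wrRes_nonneg hR0 hP w) x

lemma pX_nonneg (hP : ∀ j, IsStarProjection (P j)) (x : H) {q : Fin m → ℝ}
    (hq : ∀ j, 0 ≤ q j) (w : List (Fin m)) (j : Fin m) : 0 ≤ pX R0 P x q w j := by
  unfold pX
  split_ifs with h
  · exact div_nonneg (re_inner_apply_nonneg (wrDiss_nonneg (hP j) _) x) h.le
  · exact hq j

lemma sqrtOp_wrRes_apply_mem_closure (hR0 : 0 ≤ R0) (hP : ∀ j, IsStarProjection (P j))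
    (w : List (Fin m)) (x : H) :
    sqrtOp (wrRes R0 P w) x ∈ closure (Set.range (sqrtOp R0)) := by
  let K := (LinearMap.range (sqrtOp R0 : H →ₗ[ℂ] H)).topologicalClosure
  have hK : IsClosed (K : Set H) := Submodule.isClosed_topologicalClosure _
  have hR0K : ∀ z, R0 z ∈ K := fun z => by
    rw [← sqrtOp_mul_sqrtOp hR0]
    exact Submodule.le_topologicalClosure _ (LinearMap.mem_range_self _ _)
  have := sqrtOp_apply_mem hK (wrRes_nonneg hR0 hP w) (wrRes_apply_mem hR0 hP hK hR0K w) x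
  rwa [← SetLike.mem_coe, Submodule.topologicalClosure_coe, LinearMap.coe_range] at this

lemma mul_wrEnergy_le_sum_wrDiss (hR0 : 0 ≤ R0) (hP : ∀ j, IsStarProjection (P j)) {α : ℝ}
    (hleak : ∀ y ∈ closure (Set.range ⇑(sqrtOp R0)),
      α * ‖y‖ ^ 2 ≤ (⟪y, (∑ j, P j) y⟫_ℂ).re)
    (x : H) (w : List (Fin m)) :
    α * wrEnergy R0 P x w ≤ ∑ j, (⟪x, wrDiss (P j) (wrRes R0 P w) x⟫_ℂ).re := by
  have h := hleak _ (sqrtOp_wrRes_apply_mem_closure hR0 hP w x)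
  simp only [wrDiss, inner_sqrtOp_conj_apply]
  rwa [norm_sqrtOp_apply_sq (wrRes_nonneg hR0 hP w), _root_.sum_apply, inner_sum,
    Complex.re_sum] at h

lemma sum_pX_mul_wrEnergy_le (hR0 : 0 ≤ R0) (hP : ∀ j, IsStarProjection (P j)) {α : ℝ}
    (hα : 0 < α)
    (hleak : ∀ y ∈ closure (Set.range ⇑(sqrtOp R0)),
      α * ‖y‖ ^ 2 ≤ (⟪y, (∑ j, P j) y⟫_ℂ).re)
    (x : H) (q : Fin m → ℝ) (w : List (Fin m)) :
    ∑ j, pX R0 P x q w j * wrEnergy R0 P x (j :: w) ≤ (1 - α / m) * wrEnergy R0 P x w := by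
  have hdecomp : ∀ j, (⟪x, wrDiss (P j) (wrRes R0 P w) x⟫_ℂ).re
      + wrEnergy R0 P x (j :: w) = wrEnergy R0 P x w := fun j => by
    simp only [wrEnergy, wrRes, ← Complex.add_re, ← inner_add_right, ← add_apply,
      wrDiss_add_wrStep _ (wrRes_nonneg hR0 hP w)]
  simpa only [pX, Fintype.card_fin] using sum_ite_div_mul_le (M := wrEnergy R0 P x w) hα
    (re_inner_apply_nonneg (wrRes_nonneg hR0 hP w) x) q
    (fun j => re_inner_apply_nonneg (wrDiss_nonneg (hP j) _) x) hdecomp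
    (mul_wrEnergy_le_sum_wrDiss hR0 hP hleak x w)

end Tree

section Chain

variable {m : ℕ} {p : List (Fin m) → Fin m → ℝ}

lemma wrCylWeight_nonneg (hp : ∀ w j, 0 ≤ p w j) : ∀ w pre, 0 ≤ wrCylWeight p pre w
  | [], _ => zero_le_one
  | j :: w, pre => mul_nonneg (hp pre j) (wrCylWeight_nonneg hp w (j :: pre))

lemma wrCylWeight_append_singleton (j : Fin m) :
    ∀ w pre, wrCylWeight p pre (w ++ [j]) = wrCylWeight p pre w * p (w.reverse ++ pre) j
  | [], _ => by simp [wrCylWeight]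
  | i :: w, pre => by
    simp [wrCylWeight, wrCylWeight_append_singleton j w (i :: pre), mul_assoc]

/-- `g` reads the depth-`n` word in reversed order, like `wrRes`. -/
noncomputable def depthExpectation (p : List (Fin m) → Fin m → ℝ) (g : List (Fin m) → ℝ)
    (n : ℕ) : ℝ :=
  ∑ v : Fin n → Fin m, wrCylWeight p [] (List.ofFn v) * g (List.ofFn v).reverse

variable {g : List (Fin m) → ℝ} {c : ℝ}

lemma depthExpectation_nonneg (hp : ∀ w j, 0 ≤ p w j) (hg : ∀ w, 0 ≤ g w) (n : ℕ) :
    0 ≤ depthExpectation p g n :=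
  Finset.sum_nonneg fun _ _ => mul_nonneg (wrCylWeight_nonneg hp _ _) (hg _)

lemma depthExpectation_succ_le (hp : ∀ w j, 0 ≤ p w j)
    (hg : ∀ w, ∑ j, p w j * g (j :: w) ≤ c * g w) (n : ℕ) :
    depthExpectation p g (n + 1) ≤ c * depthExpectation p g n := by
  have hsnoc : ∀ (v : Fin n → Fin m) j,
      List.ofFn (Fin.snoc (α := fun _ => Fin m) v j) = List.ofFn v ++ [j] := fun v j => by
    rw [List.ofFn_succ', List.concat_eq_append]
    simp
  rw [depthExpectation, ← (Fin.snocEquiv fun _ => Fin m).sum_comp, Fintype.sum_prod_type,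
    Finset.sum_comm, depthExpectation, Finset.mul_sum]
  refine Finset.sum_le_sum fun v _ => ?_
  simp only [Fin.snocEquiv, Equiv.coe_fn_mk, hsnoc, wrCylWeight_append_singleton,
    List.reverse_append, List.append_nil, List.reverse_singleton, List.singleton_append]
  calc ∑ j, wrCylWeight p [] (List.ofFn v) * p (List.ofFn v).reverse j
          * g (j :: (List.ofFn v).reverse)
      = wrCylWeight p [] (List.ofFn v) * ∑ j, p (List.ofFn v).reverse j
          * g (j :: (List.ofFn v).reverse) := by
        rw [Finset.mul_sum]; exact Finset.sum_congr rfl fun _ _ => mul_assoc _ _ _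
    _ ≤ wrCylWeight p [] (List.ofFn v) * (c * g (List.ofFn v).reverse) :=
        mul_le_mul_of_nonneg_left (hg _) (wrCylWeight_nonneg hp _ _)
    _ = c * (wrCylWeight p [] (List.ofFn v) * g (List.ofFn v).reverse) := by ring

lemma depthExpectation_le_pow (hp : ∀ w j, 0 ≤ p w j)
    (hg : ∀ w, ∑ j, p w j * g (j :: w) ≤ c * g w) (hc : 0 ≤ c) (n : ℕ) :
    depthExpectation p g n ≤ c ^ n * g [] := by
  induction n with
  | zero => simp [depthExpectation, wrCylWeight]
  | succ n ih =>
    calc depthExpectation p g (n + 1) ≤ c * depthExpectation p g n :=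
          depthExpectation_succ_le hp hg n
      _ ≤ c * (c ^ n * g []) := mul_le_mul_of_nonneg_left ih hc
      _ = c ^ (n + 1) * g [] := by ring

lemma tendsto_depthExpectation_zero (hp : ∀ w j, 0 ≤ p w j) (hg0 : ∀ w, 0 ≤ g w)
    (hg : ∀ w, ∑ j, p w j * g (j :: w) ≤ c * g w) (hc0 : 0 ≤ c) (hc1 : c < 1) :
    Tendsto (depthExpectation p g) atTop (𝓝 0) :=
  squeeze_zero (depthExpectation_nonneg hp hg0) (depthExpectation_le_pow hp hg hc0)
    (by simpa using (tendsto_pow_atTop_nhds_zero_of_lt_one hc0 hc1).mul_const (g []))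

end Chain

lemma preimage_prefix_singleton {m n : ℕ} (v : Fin n → Fin m) :
    (fun (ω : ℕ → Fin m) (i : Fin n) => ω i) ⁻¹' {v} = _root_.cylinder (List.ofFn v) := by
  ext ω
  simp [_root_.cylinder, funext_iff, Fin.forall_iff]

lemma measurable_prefix (m n : ℕ) : Measurable fun (ω : ℕ → Fin m) (i : Fin n) => ω i :=
  measurable_pi_lambda _ fun i => measurable_pi_apply (i : ℕ)

lemma measurable_comp_prefix {β : Type*} [MeasurableSpace β] {m : ℕ} (g : List (Fin m) → β)
    (n : ℕ) : Measurable fun ω : ℕ → Fin m => g (List.ofFn fun i : Fin n => ω i).reverse :=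
  (measurable_of_finite fun v : Fin n → Fin m => g (List.ofFn v).reverse).comp
    (measurable_prefix m n)

lemma lintegral_ofReal_comp_prefix {m : ℕ} {ν : Measure (ℕ → Fin m)}
    {p : List (Fin m) → Fin m → ℝ} (hp : ∀ w j, 0 ≤ p w j)
    (hν : ∀ w, ν (_root_.cylinder w) = ENNReal.ofReal (wrCylWeight p [] w))
    {g : List (Fin m) → ℝ} (hg : ∀ w, 0 ≤ g w) (n : ℕ) :
    ∫⁻ ω, ENNReal.ofReal (g (List.ofFn fun i : Fin n => ω i).reverse) ∂ν
      = ENNReal.ofReal (depthExpectation p g n) := by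
  rw [← lintegral_map (f := fun v : Fin n → Fin m => ENNReal.ofReal (g (List.ofFn v).reverse))
      (measurable_of_finite _) (measurable_prefix m n), lintegral_fintype, depthExpectation,
    ENNReal.ofReal_sum_of_nonneg fun v _ => mul_nonneg (wrCylWeight_nonneg hp _ _) (hg _)]
  refine Finset.sum_congr rfl fun v _ => ?_
  rw [Measure.map_apply (measurable_prefix m n) (measurableSet_singleton v),
    preimage_prefix_singleton, hν, mul_comm, ENNReal.ofReal_mul (wrCylWeight_nonneg hp _ _)]

lemma ae_eq_zero_of_tendsto_lintegral_zero {Ω : Type*} [MeasurableSpace Ω] {μ : Measure Ω}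
    {f : ℕ → Ω → ℝ≥0∞} {F : Ω → ℝ≥0∞} (hf : ∀ n, Measurable (f n))
    (hfF : ∀ ω, Tendsto (fun n => f n ω) atTop (𝓝 (F ω)))
    (hf0 : Tendsto (fun n => ∫⁻ ω, f n ω ∂μ) atTop (𝓝 0)) : F =ᵐ[μ] 0 := by
  have hF : F = fun ω => liminf (fun n => f n ω) atTop :=
    funext fun ω => (hfF ω).liminf_eq.symm
  refine (lintegral_eq_zero_iff (hF ▸ Measurable.liminf hf)).mp (nonpos_iff_eq_zero.mp ?_)
  calc ∫⁻ ω, F ω ∂μ = ∫⁻ ω, liminf (fun n => f n ω) atTop ∂μ := by rw [← hF]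
    _ ≤ liminf (fun n => ∫⁻ ω, f n ω ∂μ) atTop := lintegral_liminf_le hf
    _ = 0 := hf0.liminf_eq

theorem wr_almost_sure_extinction_general (m : ℕ) (R0 : H →L[ℂ] H)
    (hR0 : R0.IsPositive) (P : Fin m → H →L[ℂ] H)
    (hP : ∀ j, IsSelfAdjoint (P j) ∧ P j * P j = P j)
    (α : ℝ) (hα : 0 < α)
    (hleak : ∀ y ∈ closure (Set.range ⇑(sqrtOp R0)),
      α * ‖y‖ ^ 2 ≤ (⟪y, (∑ j, P j) y⟫_ℂ).re)
    (x : H)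
    (q : Fin m → ℝ) (hq0 : ∀ j, 0 ≤ q j)
    (ν : Measure (ℕ → Fin m))
    (hν : ∀ w : List (Fin m),
      ν (cylinder w) = ENNReal.ofReal (wrCylWeight (pX R0 P x q) [] w))
    (Rinf : (ℕ → Fin m) → H →L[ℂ] H)
    (hRinf : ∀ ω (y : H),
      Tendsto (fun n => wrResB R0 P ω n y) atTop (𝓝 (Rinf ω y))) :
    ∀ᵐ ω ∂ν, (⟪x, Rinf ω x⟫_ℂ).re = 0 := by
  rcases Nat.eq_zero_or_pos m with rfl | hm
  · exact ae_of_all _ fun ω => (ω 0).elim0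
  have hR0' : 0 ≤ R0 := (nonneg_iff_isPositive R0).mpr hR0
  have hP' : ∀ j, IsStarProjection (P j) := fun j => ⟨(hP j).2, (hP j).1⟩
  have hp : ∀ w j, 0 ≤ pX R0 P x q w j := pX_nonneg hP' x hq0
  have hg0 := wrEnergy_nonneg hR0' hP' x
  have hdescent : ∀ w, ∑ j, pX R0 P x q w j * wrEnergy R0 P x (j :: w)
      ≤ max 0 (1 - α / m) * wrEnergy R0 P x w := fun w =>
    (sum_pX_mul_wrEnergy_le hR0' hP' hα hleak x q w).trans
      (mul_le_mul_of_nonneg_right (le_max_right _ _) (hg0 w))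
  have hc1 : max 0 (1 - α / m) < 1 :=
    max_lt one_pos (sub_lt_self 1 (div_pos hα (Nat.cast_pos.mpr hm)))
  have hlim : ∀ ω, Tendsto (fun n => wrEnergy R0 P x (List.ofFn fun i : Fin n => ω i).reverse)
      atTop (𝓝 (⟪x, Rinf ω x⟫_ℂ).re) := fun ω => by
    simpa only [wrEnergy, ← wrResB_eq_wrRes, Function.comp_def] using
      (Complex.continuous_re.tendsto _).comp (tendsto_const_nhds.inner (hRinf ω x))
  have hmean : Tendsto (fun n => ∫⁻ ω,
      ENNReal.ofReal (wrEnergy R0 P x (List.ofFn fun i : Fin n => ω i).reverse) ∂ν)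
      atTop (𝓝 0) := by
    simp_rw [lintegral_ofReal_comp_prefix hp hν hg0]
    simpa using ENNReal.tendsto_ofReal
      (tendsto_depthExpectation_zero hp hg0 hdescent (le_max_left _ _) hc1)
  filter_upwards [ae_eq_zero_of_tendsto_lintegral_zero
    (measurable_comp_prefix fun w => ENNReal.ofReal (wrEnergy R0 P x w))
    (fun ω => ENNReal.tendsto_ofReal (hlim ω)) hmean] with ω hω
  exact le_antisymm (ENNReal.ofReal_eq_zero.mp hω) (ge_of_tendsto' (hlim ω) fun n => hg0 _)

/-- under the leakage condition `Σ_j P_j ≥ α I` on `H₀` with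
`α > 0`, for every `x` with `⟨x,R₀x⟩ > 0` one has `⟨x, R_∞(ω) x⟩ = 0` for
`ν_x`-almost every branch `ω`. -/
theorem wr_almost_sure_extinction (m : ℕ) (R0 : H →L[ℂ] H)
    (hR0 : R0.IsPositive) (P : Fin m → H →L[ℂ] H)
    (hP : ∀ j, IsSelfAdjoint (P j) ∧ P j * P j = P j)
    (α : ℝ) (hα : 0 < α)
    (hleak : ∀ y ∈ closure (Set.range ⇑(sqrtOp R0)),
      α * ‖y‖ ^ 2 ≤ (⟪y, (∑ j, P j) y⟫_ℂ).re)
    (x : H) (hx : 0 < (⟪x, R0 x⟫_ℂ).re)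
    (q : Fin m → ℝ) (hq0 : ∀ j, 0 ≤ q j) (hq1 : ∑ j, q j = 1)
    (ν : Measure (ℕ → Fin m)) [IsProbabilityMeasure ν]
    (hν : ∀ w : List (Fin m),
      ν (cylinder w) = ENNReal.ofReal (wrCylWeight (pX R0 P x q) [] w))
    (Rinf : (ℕ → Fin m) → H →L[ℂ] H)
    (hRinf : ∀ ω (y : H),
      Tendsto (fun n => wrResB R0 P ω n y) atTop (𝓝 (Rinf ω y))) :
    ∀ᵐ ω ∂ν, (⟪x, Rinf ω x⟫_ℂ).re = 0 :=
  wr_almost_sure_extinction_general m R0 hR0 P hP α hα hleak x q hq0 ν hν Rinf hRinf
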